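/- Let $\varphi_1,\dots,\varphi_{n_t}$ be snapshots in a Hilbert space $\mathbb{V}$, $\hat C$ their Gram matrix, and $\lambda_1\ge\cdots\ge\lambda_{n_t}$ its eigenvalues. For any $N$-dimensional subspace $V_N\subseteq\mathrm{span}\{\varphi_1,\dots,\varphi_{n_t}\}$, the projection error satisfies $\sum_{i=1}^{n_t} \|\varphi_i - P_{V_N}\varphi_i\|_{\mathbb{V}}^2 \ge \sum_{k=N+1}^{n_t} \lambda_k$, with equality when $V_N$ is spanned by the POD modes $\xi^i = \sum_j \psi^i_j \varphi_j$ built from the leading $N$ eigenvectors $\psi^1,\dots,\psi^N$ of $\hat C$. -/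

import Mathlib

open scoped RealInnerProductSpace

/-!
The modes `ξₖ = ∑ⱼ ψₖⱼ φⱼ` are pairwise orthogonal with `‖ξₖ‖² = λₖ`, and the snapshots are
recovered from them by the orthogonal matrix `ψᵀ`. Hence for any finite-dimensional `K` with
projection `P`, the captured energy `∑ᵢ ‖P φᵢ‖²` equals `∑ₖ λₖ tₖ` with
`tₖ = ‖P ξₖ‖² / ‖ξₖ‖² ∈ [0, 1]`, and Bessel's inequality gives `∑ₖ tₖ ≤ dim K`. Under these
constraints `∑ₖ λₖ tₖ` is largest when all the weight sits on the `N` largest eigenvalues,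
which bounds the error from below by the tail `∑_{k ≥ N} λₖ`. The POD space attains the bound:
the residual of `φᵢ` is its component `∑_{k ≥ N} ψₖᵢ ξₖ` along the trailing modes.
-/

open Finset Matrix Module

section KyFan

theorem sum_mul_le_sum_of_threshold {ι : Type*} [Fintype ι] [DecidableEq ι] (s : Finset ι)
    (lam t : ι → ℝ) (μ : ℝ) (hμ : 0 ≤ μ) (hs : ∀ k ∈ s, μ ≤ lam k) (hsc : ∀ k ∉ s, lam k ≤ μ)
    (ht0 : ∀ k, 0 ≤ t k) (ht1 : ∀ k, t k ≤ 1) (ht : ∑ k, t k ≤ #s) :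
    ∑ k, lam k * t k ≤ ∑ k ∈ s, lam k := by
  have h_in : ∑ k ∈ s, lam k * t k ≤ ∑ k ∈ s, (lam k + μ * t k - μ) :=
    sum_le_sum fun k hk => by nlinarith [hs k hk, ht1 k]
  have h_out : ∑ k ∈ sᶜ, lam k * t k ≤ ∑ k ∈ sᶜ, μ * t k :=
    sum_le_sum fun k hk => mul_le_mul_of_nonneg_right (hsc k (mem_compl.1 hk)) (ht0 k)
  have h_mass : μ * ∑ k, t k ≤ μ * #s := mul_le_mul_of_nonneg_left ht hμ
  rw [← sum_add_sum_compl s t] at h_mass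
  rw [← sum_add_sum_compl s]
  simp only [sum_sub_distrib, sum_add_distrib, ← mul_sum, sum_const, nsmul_eq_mul] at h_in h_out
  linarith

theorem sum_mul_le_sum_filter_lt_of_antitone {n : ℕ} (N : ℕ) (lam t : Fin n → ℝ)
    (hlam : Antitone lam) (hlam0 : ∀ k, 0 ≤ lam k) (ht0 : ∀ k, 0 ≤ t k) (ht1 : ∀ k, t k ≤ 1)
    (ht : ∑ k, t k ≤ N) :
    ∑ k, lam k * t k ≤ ∑ k ∈ univ.filter fun k : Fin n => (k : ℕ) < N, lam k := by
  refine sum_mul_le_sum_of_threshold _ lam t (if h : N < n then lam ⟨N, h⟩ else 0)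
    (by split_ifs <;> simp [hlam0]) (fun k hk => ?_) (fun k hk => ?_) ht0 ht1 ?_
  · simp only [mem_filter, mem_univ, true_and] at hk
    split_ifs with h
    · exact hlam (Fin.mk_le_mk.2 hk.le)
    · exact hlam0 k
  · simp only [mem_filter, mem_univ, true_and, not_lt] at hk
    rw [dif_pos (by omega)]
    exact hlam (Fin.mk_le_mk.2 hk)
  · have h_card : ∑ k, t k ≤ n := by
      simpa using sum_le_sum fun k (_ : k ∈ univ) => ht1 k
    rw [Fin.card_filter_val_lt, Nat.cast_min]
    exact le_min h_card ht

end KyFan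

section Projection

variable {V : Type*} [NormedAddCommGroup V] [InnerProductSpace ℝ V]

theorem norm_sq_sum_smul {ι : Type*} [Fintype ι] (a : ι → ℝ) (x : ι → V) :
    ‖∑ k, a k • x k‖ ^ 2 = ∑ k, ∑ l, a k * a l * ⟪x k, x l⟫ := by
  simp only [← real_inner_self_eq_norm_sq, sum_inner, inner_sum, real_inner_smul_left,
    real_inner_smul_right, mul_assoc]
  exact sum_congr rfl fun k _ => sum_congr rfl fun l _ => by rw [real_inner_comm]

theorem norm_sq_sum_smul_of_pairwise_inner_eq_zero {ι : Type*} [Fintype ι]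
    {x : ι → V} (hx : Pairwise fun k l => ⟪x k, x l⟫ = 0) (a : ι → ℝ) :
    ‖∑ k, a k • x k‖ ^ 2 = ∑ k, a k ^ 2 * ‖x k‖ ^ 2 := by
  rw [norm_sq_sum_smul]
  refine sum_congr rfl fun k _ => ?_
  rw [sum_eq_single k (fun l _ hlk => by rw [hx hlk.symm, mul_zero]) (by simp),
    real_inner_self_eq_norm_sq]
  ring

/-- Bessel's inequality for an orthogonal family that need not be normalized; terms with
`x k = 0` vanish since `a / 0 = 0`. -/
theorem sum_inner_sq_div_norm_sq_le {ι : Type*} [Fintype ι] {x : ι → V}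
    (hx : Pairwise fun k l => ⟪x k, x l⟫ = 0) (v : V) :
    ∑ k, ⟪x k, v⟫ ^ 2 / ‖x k‖ ^ 2 ≤ ‖v‖ ^ 2 := by
  set w := ∑ k, (⟪x k, v⟫ / ‖x k‖ ^ 2) • x k
  have h_inner : ⟪v, w⟫ = ∑ k, ⟪x k, v⟫ ^ 2 / ‖x k‖ ^ 2 := by
    simp only [w, inner_sum, real_inner_smul_right, real_inner_comm v]
    exact sum_congr rfl fun k _ => by ring
  have h_norm : ‖w‖ ^ 2 = ∑ k, ⟪x k, v⟫ ^ 2 / ‖x k‖ ^ 2 := by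
    rw [norm_sq_sum_smul_of_pairwise_inner_eq_zero hx]
    refine sum_congr rfl fun k _ => ?_
    rcases eq_or_ne (‖x k‖ ^ 2) 0 with h | h
    · simp [h]
    · field_simp
  nlinarith [norm_sub_sq_real v w, sq_nonneg ‖v - w‖]

theorem norm_starProjection_sq_eq_sum {K : Submodule ℝ V} [K.HasOrthogonalProjection]
    {ι : Type*} [Fintype ι] (b : OrthonormalBasis ι ℝ K) (y : V) :
    ‖K.starProjection y‖ ^ 2 = ∑ i, ⟪(b i : V), y⟫ ^ 2 := by
  simp only [← K.inner_orthogonalProjectionOnto_eq_of_mem_left, Submodule.starProjection_apply,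
    Submodule.coe_norm, b.sum_sq_inner_right]

theorem sum_norm_starProjection_sq_div_le_finrank (K : Submodule ℝ V) [FiniteDimensional ℝ K]
    {ι : Type*} [Fintype ι] {x : ι → V}
    (hx : Pairwise fun k l => ⟪x k, x l⟫ = 0) :
    ∑ k, ‖K.starProjection (x k)‖ ^ 2 / ‖x k‖ ^ 2 ≤ finrank ℝ K := by
  set b := stdOrthonormalBasis ℝ K
  calc ∑ k, ‖K.starProjection (x k)‖ ^ 2 / ‖x k‖ ^ 2
      = ∑ m, ∑ k, ⟪x k, (b m : V)⟫ ^ 2 / ‖x k‖ ^ 2 := by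
        simp only [norm_starProjection_sq_eq_sum b, sum_div]
        rw [sum_comm]
        simp only [real_inner_comm]
    _ ≤ ∑ m, ‖(b m : V)‖ ^ 2 := sum_le_sum fun m _ => sum_inner_sq_div_norm_sq_le hx _
    _ = finrank ℝ K := by
        have h_unit (m) : ‖(b m : V)‖ = 1 := b.orthonormal.1 m
        simp [h_unit]

theorem norm_sq_sub_norm_starProjection_sq_le_iInf (K : Submodule ℝ V)
    [K.HasOrthogonalProjection] (u : V) :
    ‖u‖ ^ 2 - ‖K.starProjection u‖ ^ 2 ≤ ⨅ v : K, ‖u - v‖ ^ 2 := by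
  refine le_ciInf fun v => ?_
  have h_pyth := K.norm_sq_eq_add_norm_sq_starProjection u
  rw [Submodule.starProjection_orthogonal_val] at h_pyth
  have h_min : ‖u - K.starProjection u‖ ≤ ‖u - v‖ := by
    rw [Submodule.starProjection_minimal]
    exact ciInf_le ⟨0, by rintro _ ⟨w, rfl⟩; positivity⟩ v
  nlinarith [norm_nonneg (u - K.starProjection u)]

end Projection

section Modes

variable {V : Type*} [NormedAddCommGroup V] [InnerProductSpace ℝ V]
  {ι : Type*} [Fintype ι] [DecidableEq ι] {φ : ι → V} {ψ : ι → ι → ℝ}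

theorem sum_norm_sq_sum_smul_of_orthonormal_rows
    (horth : ∀ k l, ψ k ⬝ᵥ ψ l = if k = l then (1 : ℝ) else 0) (x : ι → V) :
    ∑ i, ‖∑ k, ψ k i • x k‖ ^ 2 = ∑ k, ‖x k‖ ^ 2 := by
  simp only [norm_sq_sum_smul]
  rw [sum_comm]
  refine sum_congr rfl fun k _ => ?_
  rw [sum_comm, sum_eq_single k (fun l _ hlk => ?_) (by simp)]
  · rw [← sum_mul, ← dotProduct, horth, if_pos rfl, one_mul, real_inner_self_eq_norm_sq]
  · rw [← sum_mul, ← dotProduct, horth, if_neg hlk.symm, zero_mul]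

theorem sum_mul_eq_ite_of_orthonormal_rows
    (horth : ∀ k l, ψ k ⬝ᵥ ψ l = if k = l then (1 : ℝ) else 0) (i j : ι) :
    ∑ k, ψ k i * ψ k j = if i = j then 1 else 0 := by
  have h_rows : Matrix.of ψ * (Matrix.of ψ)ᵀ = 1 := by
    ext k l
    simpa [Matrix.mul_apply, Matrix.one_apply, dotProduct] using horth k l
  have h_cols : (Matrix.of ψ)ᵀ * Matrix.of ψ = 1 := mul_eq_one_comm.mp h_rows
  simpa [Matrix.mul_apply, Matrix.one_apply] using congrFun (congrFun h_cols i) j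

variable (φ ψ) in
def podMode (k : ι) : V := ∑ j, ψ k j • φ j

theorem sum_smul_podMode (horth : ∀ k l, ψ k ⬝ᵥ ψ l = if k = l then (1 : ℝ) else 0) (i : ι) :
    ∑ k, ψ k i • podMode φ ψ k = φ i := by
  simp only [podMode, smul_sum, smul_smul]
  rw [sum_comm]
  simp only [← sum_smul, sum_mul_eq_ite_of_orthonormal_rows horth, ite_smul, one_smul,
    zero_smul, sum_ite_eq, mem_univ, if_true]

theorem sum_norm_sq_map_podMode {W : Type*} [NormedAddCommGroup W] [InnerProductSpace ℝ W]
    (horth : ∀ k l, ψ k ⬝ᵥ ψ l = if k = l then (1 : ℝ) else 0) (T : V →ₗ[ℝ] W) :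
    ∑ i, ‖T (φ i)‖ ^ 2 = ∑ k, ‖T (podMode φ ψ k)‖ ^ 2 := by
  calc ∑ i, ‖T (φ i)‖ ^ 2 = ∑ i, ‖∑ k, ψ k i • T (podMode φ ψ k)‖ ^ 2 := by
        simp only [← map_smul, ← map_sum, sum_smul_podMode horth]
    _ = ∑ k, ‖T (podMode φ ψ k)‖ ^ 2 := sum_norm_sq_sum_smul_of_orthonormal_rows horth _

variable {Chat : Matrix ι ι ℝ} {lam : ι → ℝ}

theorem inner_podMode (hChat : ∀ i j, Chat i j = ⟪φ i, φ j⟫)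
    (heig : ∀ k, Chat *ᵥ ψ k = lam k • ψ k)
    (horth : ∀ k l, ψ k ⬝ᵥ ψ l = if k = l then (1 : ℝ) else 0) (k l : ι) :
    ⟪podMode φ ψ k, podMode φ ψ l⟫ = if k = l then lam k else 0 := by
  calc ⟪podMode φ ψ k, podMode φ ψ l⟫ = ψ k ⬝ᵥ (Chat *ᵥ ψ l) := by
        simp only [podMode, sum_inner, inner_sum, real_inner_smul_left, real_inner_smul_right,
          ← hChat, dotProduct, mulVec, mul_sum]
        rw [sum_comm]
        exact sum_congr rfl fun i _ => sum_congr rfl fun j _ => by ring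
    _ = lam l * (ψ k ⬝ᵥ ψ l) := by rw [heig, dotProduct_smul, smul_eq_mul]
    _ = if k = l then lam k else 0 := by rw [horth]; split_ifs with h <;> simp [h]

theorem norm_sq_podMode (hChat : ∀ i j, Chat i j = ⟪φ i, φ j⟫)
    (heig : ∀ k, Chat *ᵥ ψ k = lam k • ψ k)
    (horth : ∀ k l, ψ k ⬝ᵥ ψ l = if k = l then (1 : ℝ) else 0) (k : ι) :
    ‖podMode φ ψ k‖ ^ 2 = lam k := by
  rw [← real_inner_self_eq_norm_sq, inner_podMode hChat heig horth, if_pos rfl]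

end Modes

section Optimality

variable {V : Type*} [NormedAddCommGroup V] [InnerProductSpace ℝ V] {nt N : ℕ}
  {φ : Fin nt → V} {Chat : Matrix (Fin nt) (Fin nt) ℝ} {lam : Fin nt → ℝ}
  {ψ : Fin nt → Fin nt → ℝ}

theorem sum_filter_le_sum_iInf_norm_sub_sq (hChat : ∀ i j, Chat i j = ⟪φ i, φ j⟫)
    (heig : ∀ k, Chat *ᵥ ψ k = lam k • ψ k)
    (horth : ∀ k l, ψ k ⬝ᵥ ψ l = if k = l then (1 : ℝ) else 0) (hsort : Antitone lam)
    (K : Submodule ℝ V) [FiniteDimensional ℝ K] (hK : finrank ℝ K ≤ N) :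
    ∑ k ∈ univ.filter fun k : Fin nt => N ≤ (k : ℕ), lam k ≤
      ∑ i, ⨅ v : K, ‖φ i - (v : V)‖ ^ 2 := by
  let ξ := podMode φ ψ
  let P := K.starProjection
  let t : Fin nt → ℝ := fun k => ‖P (ξ k)‖ ^ 2 / ‖ξ k‖ ^ 2
  have h_lam (k) : ‖ξ k‖ ^ 2 = lam k := norm_sq_podMode hChat heig horth k
  have h_orth : Pairwise fun k l => ⟪ξ k, ξ l⟫ = 0 := fun k l hkl =>
    (inner_podMode hChat heig horth k l).trans (if_neg hkl)
  have h_proj (k) : ‖P (ξ k)‖ ^ 2 ≤ ‖ξ k‖ ^ 2 :=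
    pow_le_pow_left₀ (norm_nonneg _) (K.norm_starProjection_apply_le _) 2
  have h_weight (k) : lam k * t k = ‖P (ξ k)‖ ^ 2 := by
    rw [← h_lam]
    exact (mul_div_assoc _ _ _).symm.trans
      (mul_div_cancel_left_of_imp fun h => le_antisymm ((h_proj k).trans_eq h) (sq_nonneg _))
  have h_kyfan : ∑ k, lam k * t k ≤ ∑ k ∈ univ.filter fun k : Fin nt => (k : ℕ) < N, lam k :=
    sum_mul_le_sum_filter_lt_of_antitone N lam t hsort (fun k => h_lam k ▸ sq_nonneg _)
      (fun k => by positivity) (fun k => div_le_one_of_le₀ (h_proj k) (sq_nonneg _))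
      ((sum_norm_starProjection_sq_div_le_finrank K h_orth).trans (by exact_mod_cast hK))
  have h_total : ∑ i, ‖φ i‖ ^ 2 = ∑ k, lam k := by
    simpa [norm_sq_podMode hChat heig horth] using sum_norm_sq_map_podMode (φ := φ) horth LinearMap.id
  have h_captured : ∑ i, ‖P (φ i)‖ ^ 2 = ∑ k, lam k * t k := by
    simpa [h_weight] using sum_norm_sq_map_podMode (φ := φ) horth (P : V →ₗ[ℝ] V)
  have h_split := sum_filter_add_sum_filter_not univ (fun k : Fin nt => N ≤ (k : ℕ)) lam
  simp only [not_le] at h_split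
  calc ∑ k ∈ univ.filter fun k : Fin nt => N ≤ (k : ℕ), lam k
      ≤ ∑ i, (‖φ i‖ ^ 2 - ‖P (φ i)‖ ^ 2) := by rw [sum_sub_distrib]; linarith
    _ ≤ ∑ i, ⨅ v : K, ‖φ i - (v : V)‖ ^ 2 :=
      sum_le_sum fun i _ => norm_sq_sub_norm_starProjection_sq_le_iInf K (φ i)

theorem sum_iInf_norm_sub_sq_le_sum_filter (hN : N ≤ nt) (hChat : ∀ i j, Chat i j = ⟪φ i, φ j⟫)
    (heig : ∀ k, Chat *ᵥ ψ k = lam k • ψ k)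
    (horth : ∀ k l, ψ k ⬝ᵥ ψ l = if k = l then (1 : ℝ) else 0) :
    ∑ i, ⨅ v : Submodule.span ℝ (Set.range fun k : Fin N => podMode φ ψ (Fin.castLE hN k)),
        ‖φ i - (v : V)‖ ^ 2 ≤
      ∑ k ∈ univ.filter fun k : Fin nt => N ≤ (k : ℕ), lam k := by
  set K := Submodule.span ℝ (Set.range fun k : Fin N => podMode φ ψ (Fin.castLE hN k))
  let ξ := podMode φ ψ
  set lead : Fin nt → V := fun k => if N ≤ (k : ℕ) then 0 else ξ k
  set trail : Fin nt → V := fun k => if N ≤ (k : ℕ) then ξ k else 0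
  have h_lead (k) : lead k ∈ K := by
    by_cases hk : N ≤ (k : ℕ)
    · simp [lead, hk]
    · simp only [lead, if_neg hk]
      exact Submodule.subset_span ⟨⟨k, by omega⟩, rfl⟩
  have h_res (i) : φ i - ∑ k, ψ k i • lead k = ∑ k, ψ k i • trail k := by
    conv_lhs => rw [← sum_smul_podMode (φ := φ) horth i]
    rw [← sum_sub_distrib]
    refine sum_congr rfl fun k _ => ?_
    rw [← smul_sub]
    by_cases hk : N ≤ (k : ℕ) <;> simp [lead, trail, hk, ξ]
  calc ∑ i, ⨅ v : K, ‖φ i - (v : V)‖ ^ 2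
      ≤ ∑ i, ‖φ i - ∑ k, ψ k i • lead k‖ ^ 2 := by
        refine sum_le_sum fun i _ => ?_
        exact ciInf_le (f := fun v : K => ‖φ i - (v : V)‖ ^ 2)
          ⟨0, by rintro _ ⟨v, rfl⟩; positivity⟩
          ⟨∑ k, ψ k i • lead k, K.sum_mem fun k _ => K.smul_mem _ (h_lead k)⟩
    _ = ∑ k, ‖trail k‖ ^ 2 := by
      simp only [h_res]
      exact sum_norm_sq_sum_smul_of_orthonormal_rows horth trail
    _ = ∑ k ∈ univ.filter fun k : Fin nt => N ≤ (k : ℕ), lam k := by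
      rw [sum_filter]
      refine sum_congr rfl fun k _ => ?_
      by_cases hk : N ≤ (k : ℕ) <;> simp [trail, hk, ξ, norm_sq_podMode hChat heig horth]

end Optimality

/-- POD optimality: for any `N`-dimensional subspace `V_N` of the span of the snapshots,
the total squared projection error is at least the tail sum `∑_{k>N} λ_k` of the sorted
eigenvalues of the Gram matrix `Ĉ`, with equality for the POD space spanned by the modes
`ξⁱ = ∑ⱼ ψⁱⱼ φⱼ` built from the leading `N` (orthonormal) eigenvectors of `Ĉ`. -/
theorem pod_optimality
    {V : Type*} [NormedAddCommGroup V] [InnerProductSpace ℝ V]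
    (nt N : ℕ) (hN : N ≤ nt) (φ : Fin nt → V)
    (Chat : Matrix (Fin nt) (Fin nt) ℝ) (hChat : ∀ i j, Chat i j = ⟪φ i, φ j⟫)
    (lam : Fin nt → ℝ) (ψ : Fin nt → Fin nt → ℝ)
    (heig : ∀ k, Chat.mulVec (ψ k) = lam k • ψ k)
    (horth : ∀ k l, dotProduct (ψ k) (ψ l) = if k = l then (1 : ℝ) else 0)
    (hsort : ∀ k l : Fin nt, k ≤ l → lam l ≤ lam k) :
    (∀ VN : Submodule ℝ V, VN ≤ Submodule.span ℝ (Set.range φ) →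
      Module.finrank ℝ VN = N →
      (∑ k ∈ Finset.univ.filter fun k : Fin nt => N ≤ (k : ℕ), lam k) ≤
        ∑ i, ⨅ v : VN, ‖φ i - (v : V)‖ ^ 2) ∧
    (∑ i, ⨅ v : (Submodule.span ℝ
          (Set.range fun k : Fin N => ∑ j, ψ (Fin.castLE hN k) j • φ j) : Submodule ℝ V),
        ‖φ i - (v : V)‖ ^ 2) =
      ∑ k ∈ Finset.univ.filter fun k : Fin nt => N ≤ (k : ℕ), lam k := by
  refine ⟨fun VN hle hrank => ?_, ?_⟩
  · have := FiniteDimensional.span_of_finite ℝ (Set.finite_range φ)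
    have : FiniteDimensional ℝ VN := Submodule.finiteDimensional_of_le hle
    exact sum_filter_le_sum_iInf_norm_sub_sq hChat heig horth hsort VN hrank.le
  · have := FiniteDimensional.span_of_finite ℝ
      (Set.finite_range fun k : Fin N => ∑ j, ψ (Fin.castLE hN k) j • φ j)
    -- the POD space has dimension `< N` when a leading `λₖ` vanishes, hence `finrank ≤ N` above
    exact le_antisymm (sum_iInf_norm_sub_sq_le_sum_filter hN hChat heig horth)
      (sum_filter_le_sum_iInf_norm_sub_sq hChat heig horth hsort _
        ((finrank_range_le_card _).trans_eq (Fintype.card_fin N)))
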